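/- χ²-statistic sensitivity bound: for a 2×2 contingency table from a GWAS dataset with n participants (n even, balanced case/control design), the χ² statistic, viewed as a function of the table with one individual's entry changed, has global sensitivity at most 4n/(n+2). -/

import Mathlib

/-!
With `n = 2m`, the statistic is `χ²(a, c) = n (a - c)² / ((a + c) (n - a - c))`, and it is
invariant under swapping the two genotype columns, `(a, c) ↦ (m - a, m - c)`. That swap turns
the step `a ↦ a + 1` at `(a, c)` into the reverse step at `(m - a - 1, m - c)`, so it suffices
to bound the increase `χ²(a + 1, c) - χ²(a, c)` from above. When the first column is empty or
full the statistic vanishes and the change is `n / (n - 1)`; in between, clearing the positive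
denominators leaves a polynomial inequality on the box `0 ≤ a < m`, `0 ≤ c ≤ m`.
-/

/-- χ² statistic of the 2×2 genotype-by-status contingency table in a balanced design with
`n` participants: rows (cases/controls) each have `n/2` individuals; `a` and `c` are the
counts in the first column for cases and controls respectively. -/
noncomputable def chisq (n a c : ℝ) : ℝ :=
  n * (a * (n / 2 - c) - (n / 2 - a) * c) ^ 2 /
    ((n / 2) * (n / 2) * (a + c) * (n - a - c))

lemma chisq_two_mul (M A C : ℝ) (hM : M ≠ 0) :
    chisq (2 * M) A C = 2 * M * (A - C) ^ 2 / ((A + C) * (2 * M - A - C)) := by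
  rw [chisq, ← mul_div_mul_left (2 * M * (A - C) ^ 2) _ (pow_ne_zero 2 hM)]
  congr 1 <;> ring

lemma chisq_swap_columns (M A C : ℝ) : chisq (2 * M) (M - A) (M - C) = chisq (2 * M) A C := by
  unfold chisq
  congr 1 <;> ring

lemma chisq_nonneg {n a c : ℝ} (hs : 0 ≤ a + c) (hsn : a + c ≤ n) : 0 ≤ chisq n a c := by
  unfold chisq
  have : 0 ≤ n - a - c := by linarith
  have : 0 ≤ n := by linarith
  positivity

lemma chisq_step_cleared_le (M A C : ℝ) (hA : 0 ≤ A) (hAM : A + 1 ≤ M) (hC : 0 ≤ C)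
    (hCM : C ≤ M) (hs : 1 ≤ A + C) :
    (M + 1) * ((A - C + 1) ^ 2 * ((A + C) * (2 * M - A - C))
        - (A - C) ^ 2 * ((A + C + 1) * (2 * M - A - C - 1)))
      ≤ 2 * ((A + C + 1) * (2 * M - A - C - 1) * ((A + C) * (2 * M - A - C))) := by
  have hMC : 0 ≤ M - C := by linarith
  have hMA : 0 ≤ M - 1 - A := by linarith
  nlinarith [mul_nonneg hA hC, mul_nonneg hMC hA, mul_nonneg hMC hC, sq_nonneg (A - C),
    sq_nonneg (A + C - 1), mul_nonneg (mul_nonneg hA hC) hMC, mul_nonneg hC hMA,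
    mul_nonneg hMA hMC, mul_nonneg (mul_nonneg hC hC) hMA, sq_nonneg (M - 1 - A), sq_nonneg C,
    mul_nonneg hC hC]

lemma chisq_succ_sub_le_of_one_le (M A C : ℝ) (hA : 0 ≤ A) (hAM : A + 1 ≤ M) (hC : 0 ≤ C)
    (hCM : C ≤ M) (hs : 1 ≤ A + C) (hs' : A + C + 2 ≤ 2 * M) :
    chisq (2 * M) (A + 1) C - chisq (2 * M) A C ≤ 4 * (2 * M) / (2 * M + 2) := by
  have hM : M ≠ 0 := by linarith
  have hD1 : 0 < (A + 1 + C) * (2 * M - (A + 1) - C) := mul_pos (by linarith) (by linarith)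
  have hD2 : 0 < (A + C) * (2 * M - A - C) := mul_pos (by linarith) (by linarith)
  rw [chisq_two_mul M _ _ hM, chisq_two_mul M _ _ hM, div_sub_div _ _ hD1.ne' hD2.ne',
    div_le_div_iff₀ (mul_pos hD1 hD2) (by linarith)]
  have key := mul_le_mul_of_nonneg_left (chisq_step_cleared_le M A C hA hAM hC hCM hs)
    (by linarith : (0 : ℝ) ≤ 4 * M)
  linarith

lemma chisq_one_zero_le (M : ℝ) (hM : 1 ≤ M) :
    chisq (2 * M) 1 0 ≤ 4 * (2 * M) / (2 * M + 2) := by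
  rw [chisq_two_mul M _ _ (by positivity), div_le_div_iff₀ (by nlinarith) (by linarith)]
  nlinarith

lemma chisq_succ_sub_le (m a c : ℕ) (ha : a + 1 ≤ m) (hc : c ≤ m) :
    chisq (2 * m) (a + 1) c - chisq (2 * m) a c ≤ 4 * (2 * m) / (2 * m + 2) := by
  have hm : (1 : ℝ) ≤ m := by exact_mod_cast (by omega : 1 ≤ m)
  have ha' : (a : ℝ) + 1 ≤ m := by exact_mod_cast ha
  have hc' : (c : ℝ) ≤ m := by exact_mod_cast hc
  rcases Nat.eq_zero_or_pos (a + c) with hs | hs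
  · obtain ⟨rfl, rfl⟩ : a = 0 ∧ c = 0 := by omega
    simpa [chisq] using chisq_one_zero_le m hm
  by_cases hfar : a + 1 = m ∧ c = m
  · have ha_eq : (a : ℝ) + 1 = m := by exact_mod_cast hfar.1
    have hc_eq : (c : ℝ) = m := by exact_mod_cast hfar.2
    have hzero : chisq (2 * m) m m = 0 := by simp [chisq]
    rw [ha_eq, hc_eq, hzero]
    have hprev : 0 ≤ chisq (2 * m) a m := chisq_nonneg (by positivity) (by linarith)
    have : (0 : ℝ) ≤ 4 * (2 * m) / (2 * m + 2) := by positivity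
    linarith
  · exact chisq_succ_sub_le_of_one_le m a c (Nat.cast_nonneg a) ha' (Nat.cast_nonneg c) hc'
      (by exact_mod_cast hs) (by exact_mod_cast (by omega : a + c + 2 ≤ 2 * m))

theorem chisq_sensitivity_general (n : ℕ) (heven : Even n) (a c : ℕ)
    (ha : a + 1 ≤ n / 2) (hc : c ≤ n / 2) :
    |chisq n (a + 1) c - chisq n a c| ≤ 4 * n / (n + 2) := by
  obtain ⟨m, rfl⟩ := heven
  rw [show (m + m) / 2 = m by omega] at ha hc
  rw [show ((m + m : ℕ) : ℝ) = 2 * m by push_cast; ring, abs_sub_le_iff]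
  refine ⟨chisq_succ_sub_le m a c ha hc, ?_⟩
  have hmirror := chisq_succ_sub_le m (m - (a + 1)) (m - c) (by omega) (by omega)
  rw [Nat.cast_sub ha, Nat.cast_sub hc, Nat.cast_add, Nat.cast_one,
    show (m : ℝ) - (a + 1) + 1 = m - a by ring, chisq_swap_columns, chisq_swap_columns] at hmirror
  linarith

/-- χ²-statistic sensitivity bound (Uhler et al. 2013): in a balanced GWAS with `n`
participants, changing one individual's genotype (moving one count within its row) changes
the χ² statistic by at most `4n/(n+2)`. -/
theorem chisq_sensitivity (n : ℕ) (hpos : 0 < n) (heven : Even n) (a c : ℕ)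
    (ha : a + 1 ≤ n / 2) (hc : c ≤ n / 2) :
    |chisq n (a + 1) c - chisq n a c| ≤ 4 * n / (n + 2) :=
  chisq_sensitivity_general n heven a c ha hc
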